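/- arXiv:math-ph/0402052 — 2 statements merged into one kernel-verified Lean document; each statement's English description precedes it below -/
import Mathlib

section
/- Let M, Ω : I → so(n) satisfy Euler's equation Ṁ = [M, Ω], where M(t) = JΩ(t) + Ω(t)J for a constant symmetric matrix J. Then for every λ ∈ R, the family L_λ(t) = M(t) + λJ² satisfies the Lax equation L̇_λ = [L_λ, B_λ] with B_λ(t) = Ω(t) + λJ (Manakov's Lax pair). -/
/-!
Differentiating `L_λ = M + λJ²` gives `Ṁ = [M, Ω]`, so it suffices that
`[M + λJ², Ω + λJ] = [M, Ω]`. Expanding in `λ`, the quadratic term is `[J², J] = 0` and the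
linear term is `[M, J] + [J², Ω]`, which vanishes identically once `M = JΩ + ΩJ`.
-/

open Matrix

attribute [local instance] Matrix.normedAddCommGroup Matrix.normedSpace

theorem manakov_bracket_eq {𝕜 A : Type*} [CommRing 𝕜] [Ring A] [Algebra 𝕜 A]
    {J Ω M : A} (hM : M = J * Ω + Ω * J) (l : 𝕜) :
    (M + l • J ^ 2) * (Ω + l • J) - (Ω + l • J) * (M + l • J ^ 2) = M * Ω - Ω * M := by
  subst hM
  simp only [mul_add, add_mul, smul_mul_assoc, mul_smul_comm, smul_add, pow_two, mul_assoc]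
  abel

theorem stmt_10_general (n : ℕ) (I : Set ℝ) (J : Matrix (Fin n) (Fin n) ℝ)
    (Ω M : ℝ → Matrix (Fin n) (Fin n) ℝ)
    (hM : ∀ t, M t = J * Ω t + Ω t * J)
    (heuler : ∀ t ∈ I, HasDerivWithinAt M (M t * Ω t - Ω t * M t) I t) :
    ∀ l : ℝ, ∀ t ∈ I,
      HasDerivWithinAt (fun s => M s + l • J ^ 2)
        ((M t + l • J ^ 2) * (Ω t + l • J) - (Ω t + l • J) * (M t + l • J ^ 2)) I t := by
  intro l t ht
  rw [manakov_bracket_eq (hM t)]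
  exact (heuler t ht).add_const _

/-- Manakov's Lax pair: if `M = JΩ + ΩJ` (with `J` constant symmetric, `Ω` skew-symmetric)
satisfies Euler's equation `Ṁ = [M, Ω]` on the interval `I`, then for every `λ ∈ ℝ` the family
`L_λ = M + λJ²` satisfies the Lax equation `L̇_λ = [L_λ, B_λ]` with `B_λ = Ω + λJ`. -/
theorem stmt_10 (n : ℕ) (I : Set ℝ) (J : Matrix (Fin n) (Fin n) ℝ) (hJ : Jᵀ = J)
    (Ω M : ℝ → Matrix (Fin n) (Fin n) ℝ)
    (hΩskew : ∀ t ∈ I, (Ω t)ᵀ = -(Ω t))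
    (hM : ∀ t, M t = J * Ω t + Ω t * J)
    (heuler : ∀ t ∈ I, HasDerivWithinAt M (M t * Ω t - Ω t * M t) I t) :
    ∀ l : ℝ, ∀ t ∈ I,
      HasDerivWithinAt (fun s => M s + l • J ^ 2)
        ((M t + l • J ^ 2) * (Ω t + l • J) - (Ω t + l • J) * (M t + l • J ^ 2)) I t :=
  stmt_10_general n I J Ω M hM heuler
end

section
/- Under the hypotheses of Manakov's Lax pair (Ṁ = [M,Ω] with M = JΩ + ΩJ, J constant symmetric), for each k ≥ 2 and each λ, the quantity tr((M(t) + λJ²)^k) is constant in t; hence the coefficients of the polynomial λ ↦ tr((M + λJ²)^k) are integrals of motion. -/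
open Matrix

attribute [local instance] Matrix.normedAddCommGroup Matrix.normedSpace

/-!
Shifting Manakov's Lax pair by the spectral parameter, `L = M + λJ²` and `B = Ω + λJ`, keeps it a
Lax pair: `L̇ = Ṁ = [M, Ω] = [L, B]`. Then `(Lᵏ)˙ = [Lᵏ, B]` has trace zero, so `tr Lᵏ` is
constant on the convex set `I` by the mean value inequality.
-/

namespace Matrix

variable {m : Type*} [Fintype m] {I : Set ℝ} {t : ℝ}

theorem hasDerivWithinAt_apply {f : ℝ → Matrix m m ℝ} {f' : Matrix m m ℝ}
    (h : HasDerivWithinAt f f' I t) (i j : m) :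
    HasDerivWithinAt (fun s => f s i j) (f' i j) I t :=
  hasDerivWithinAt_pi.1 (hasDerivWithinAt_pi.1 h i) j

theorem hasDerivWithinAt_of_apply {f : ℝ → Matrix m m ℝ} {f' : Matrix m m ℝ}
    (h : ∀ i j, HasDerivWithinAt (fun s => f s i j) (f' i j) I t) :
    HasDerivWithinAt f f' I t :=
  hasDerivWithinAt_pi.2 fun i => hasDerivWithinAt_pi.2 fun j => h i j

theorem hasDerivWithinAt_mul {f g : ℝ → Matrix m m ℝ} {f' g' : Matrix m m ℝ}
    (hf : HasDerivWithinAt f f' I t) (hg : HasDerivWithinAt g g' I t) :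
    HasDerivWithinAt (fun s => f s * g s) (f' * g t + f t * g') I t := by
  refine hasDerivWithinAt_of_apply fun i j => ?_
  have hsum : HasDerivWithinAt (fun s => ∑ k, f s i k * g s k j)
      (∑ k, (f' i k * g t k j + f t i k * g' k j)) I t :=
    HasDerivWithinAt.fun_sum fun k _ =>
      (hasDerivWithinAt_apply hf i k).mul (hasDerivWithinAt_apply hg k j)
  simpa only [mul_apply, add_apply, Finset.sum_add_distrib] using hsum

theorem hasDerivWithinAt_trace {f : ℝ → Matrix m m ℝ} {f' : Matrix m m ℝ}
    (h : HasDerivWithinAt f f' I t) :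
    HasDerivWithinAt (fun s => (f s).trace) f'.trace I t :=
  HasDerivWithinAt.fun_sum fun i _ => hasDerivWithinAt_apply h i i

theorem hasDerivWithinAt_pow_of_lax [DecidableEq m] {L : ℝ → Matrix m m ℝ} {B : Matrix m m ℝ}
    (hL : HasDerivWithinAt L (L t * B - B * L t) I t) (k : ℕ) :
    HasDerivWithinAt (fun s => L s ^ k) (L t ^ k * B - B * L t ^ k) I t := by
  induction k with
  | zero =>
    simp only [pow_zero, mul_one, one_mul, sub_self]
    exact hasDerivWithinAt_const t I 1
  | succ k ih =>
    have hcomm : (L t ^ k * B - B * L t ^ k) * L t + L t ^ k * (L t * B - B * L t)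
        = L t ^ (k + 1) * B - B * L t ^ (k + 1) := by
      rw [pow_succ]; noncomm_ring
    simpa only [pow_succ, hcomm] using hasDerivWithinAt_mul ih hL

theorem trace_pow_eq_of_lax [DecidableEq m] {L B : ℝ → Matrix m m ℝ} (hI : Convex ℝ I)
    (hL : ∀ t ∈ I, HasDerivWithinAt L (L t * B t - B t * L t) I t) (k : ℕ)
    {s t : ℝ} (hs : s ∈ I) (ht : t ∈ I) : (L s ^ k).trace = (L t ^ k).trace := by
  have hderiv : ∀ u ∈ I, HasDerivWithinAt (fun v => (L v ^ k).trace) 0 I u := fun u hu => by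
    simpa only [trace_sub, trace_mul_comm (L u ^ k), sub_self] using
      hasDerivWithinAt_trace (hasDerivWithinAt_pow_of_lax (hL u hu) k)
  simpa only [zero_mul, norm_le_zero_iff, sub_eq_zero] using
    hI.norm_image_sub_le_of_norm_hasDerivWithin_le (f' := fun _ => 0) hderiv
      (fun _ _ => norm_zero.le) ht hs

end Matrix

theorem commutator_eq_shifted_commutator {K R : Type*} [CommRing K] [Ring R] [Algebra K R]
    (J Ω : R) (l : K) :
    (J * Ω + Ω * J) * Ω - Ω * (J * Ω + Ω * J)
      = (J * Ω + Ω * J + l • J ^ 2) * (Ω + l • J) - (Ω + l • J) * (J * Ω + Ω * J + l • J ^ 2) := by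
  simp only [add_mul, mul_add, smul_mul_assoc, mul_smul_comm, pow_two]
  noncomm_ring
  simp only [smul_add]
  abel

theorem stmt_11_general (n : ℕ) (I : Set ℝ) (hI : Convex ℝ I) (J : Matrix (Fin n) (Fin n) ℝ)
    (Ω M : ℝ → Matrix (Fin n) (Fin n) ℝ)
    (hM : ∀ t, M t = J * Ω t + Ω t * J)
    (heuler : ∀ t ∈ I, HasDerivWithinAt M (M t * Ω t - Ω t * M t) I t) :
    ∀ k : ℕ, 2 ≤ k → ∀ l : ℝ, ∀ s ∈ I, ∀ t ∈ I,
      ((M s + l • J ^ 2) ^ k).trace = ((M t + l • J ^ 2) ^ k).trace := by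
  intro k _ l s hs t ht
  refine trace_pow_eq_of_lax (L := fun u => M u + l • J ^ 2) (B := fun u => Ω u + l • J)
    hI (fun u hu => ?_) k hs ht
  have hshift := (heuler u hu).add_const (l • J ^ 2)
  rwa [hM u, commutator_eq_shifted_commutator J (Ω u) l, ← hM u] at hshift

/-- Under the hypotheses of Manakov's Lax pair (`Ṁ = [M,Ω]` with `M = JΩ + ΩJ`, `J` constant
symmetric, `Ω` skew), for each `k ≥ 2` and each `λ ∈ ℝ` the quantity `tr((M(t) + λJ²)^k)` is
constant in `t`; hence the coefficients of `λ ↦ tr((M + λJ²)^k)` are integrals of motion. -/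
theorem stmt_11 (n : ℕ) (I : Set ℝ) (hI : Convex ℝ I) (J : Matrix (Fin n) (Fin n) ℝ)
    (hJ : Jᵀ = J) (Ω M : ℝ → Matrix (Fin n) (Fin n) ℝ)
    (hΩskew : ∀ t ∈ I, (Ω t)ᵀ = -(Ω t))
    (hM : ∀ t, M t = J * Ω t + Ω t * J)
    (heuler : ∀ t ∈ I, HasDerivWithinAt M (M t * Ω t - Ω t * M t) I t) :
    ∀ k : ℕ, 2 ≤ k → ∀ l : ℝ, ∀ s ∈ I, ∀ t ∈ I,
      ((M s + l • J ^ 2) ^ k).trace = ((M t + l • J ^ 2) ^ k).trace :=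
  stmt_11_general n I hI J Ω M hM heuler
end
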